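/- Let Ŝ, R̂ be invertible diagonal Nₑ×Nₑ matrices, S, R invertible diagonal Nₙ×Nₙ matrices, and Mᵉ an Nₑ×Nₙ matrix. Define Wₙ = R⁻¹·S⁻¹·(Mᵉ)ᵀ·Ŝ·R̂, dV = (2π/3)·S·R·𝟙, dVᵉ = 2π·Ŝ·R̂·𝟙 (where 𝟙 denotes the all-ones vector). Then for any Q ∈ ℝ^{Nₙ}, Uᵉ ∈ ℝ^{Nₑ}, with Qᵉ = (1/3)·Mᵉ·Q, one has dVᵀ·(Q ∘ (Wₙ·Uᵉ)) = (dVᵉ)ᵀ·(Qᵉ ∘ Uᵉ), where ∘ denotes entrywise (Hadamard) product. -/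

import Mathlib

/-!
Since `diagonal d *ᵥ 1 = d`, a pairing `(diagonal d *ᵥ 1) ⬝ᵥ (Q * w)` equals `Q ⬝ᵥ (diagonal d *ᵥ w)`.
On the left this applies `S R` to `Wₙ Uᵉ`, cancelling the `R⁻¹ S⁻¹` of `Wₙ` and leaving
`Q ⬝ᵥ (Mᵉᵀ Ŝ R̂ Uᵉ) = (Mᵉ Q) ⬝ᵥ (Ŝ R̂ Uᵉ)`; the right-hand side reduces to the same pairing,
and the factors `2π/3` and `2π · 1/3` agree.
-/

open Matrix Real

theorem diagonal_mulVec_one_dotProduct_mul {ι α : Type*} [Fintype ι] [DecidableEq ι]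
    [CommSemiring α] (d x y : ι → α) :
    (diagonal d *ᵥ 1) ⬝ᵥ (x * y) = x ⬝ᵥ (diagonal d *ᵥ y) := by
  simp only [dotProduct, mulVec_diagonal, Pi.one_apply, mul_one, Pi.mul_apply]
  exact Finset.sum_congr rfl fun i _ => mul_left_comm _ _ _

theorem isUnit_det_diagonal {ι K : Type*} [Fintype ι] [DecidableEq ι] [Field K] {d : ι → K}
    (hd : ∀ i, d i ≠ 0) : IsUnit (diagonal d).det := by
  rw [det_diagonal]
  exact (Finset.prod_ne_zero_iff.mpr fun i _ => hd i).isUnit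

theorem diagonal_mulVec_one_dotProduct_mul_inv_mul_transpose {ι κ K : Type*}
    [Fintype ι] [DecidableEq ι] [Fintype κ] [Field K] {d : ι → K} (hd : ∀ i, d i ≠ 0)
    (M : Matrix κ ι K) (E : Matrix κ κ K) (q : ι → K) (u : κ → K) :
    (diagonal d *ᵥ 1) ⬝ᵥ (q * ((diagonal d)⁻¹ * Mᵀ * E) *ᵥ u) = (M *ᵥ q) ⬝ᵥ (E *ᵥ u) := by
  rw [diagonal_mulVec_one_dotProduct_mul, mulVec_mulVec, Matrix.mul_assoc,
    mul_nonsing_inv_cancel_left _ _ (isUnit_det_diagonal hd), ← mulVec_mulVec,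
    dotProduct_mulVec, vecMul_transpose]

theorem stmt_8_general {Ne Nn : ℕ}
    (sh rh : Fin Ne → ℝ) (s r : Fin Nn → ℝ)
    (hs : ∀ n, s n ≠ 0) (hr : ∀ n, r n ≠ 0)
    (Me : Matrix (Fin Ne) (Fin Nn) ℝ)
    (Wn : Matrix (Fin Nn) (Fin Ne) ℝ)
    (hWn : Wn = (Matrix.diagonal r)⁻¹ * (Matrix.diagonal s)⁻¹ * Meᵀ *
        Matrix.diagonal sh * Matrix.diagonal rh)
    (dV : Fin Nn → ℝ)
    (hdV : dV = (2 * π / 3) • (Matrix.diagonal s * Matrix.diagonal r).mulVec 1)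
    (dVe : Fin Ne → ℝ)
    (hdVe : dVe = (2 * π) • (Matrix.diagonal sh * Matrix.diagonal rh).mulVec 1)
    (Q : Fin Nn → ℝ) (Ue : Fin Ne → ℝ)
    (Qe : Fin Ne → ℝ) (hQe : Qe = (1/3 : ℝ) • Me.mulVec Q) :
    dV ⬝ᵥ (Q * Wn.mulVec Ue) = dVe ⬝ᵥ (Qe * Ue) := by
  have hS : diagonal s * diagonal r = diagonal (s * r) := diagonal_mul_diagonal s r
  have hE : diagonal sh * diagonal rh = diagonal (sh * rh) := diagonal_mul_diagonal sh rh
  have hWn' : Wn = (diagonal (s * r))⁻¹ * Meᵀ * diagonal (sh * rh) := by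
    rw [hWn, ← hS, ← hE, Matrix.mul_inv_rev, Matrix.mul_assoc _ _ (diagonal rh)]
  rw [hWn', hdV, hdVe, hQe, hS, hE, smul_dotProduct, smul_dotProduct, smul_mul_assoc,
    diagonal_mulVec_one_dotProduct_mul_inv_mul_transpose (d := s * r)
      (fun n => mul_ne_zero (hs n) (hr n)),
    dotProduct_smul, diagonal_mulVec_one_dotProduct_mul, smul_eq_mul, smul_eq_mul, smul_eq_mul]
  ring

theorem stmt_8 {Ne Nn : ℕ}
    (sh rh : Fin Ne → ℝ) (s r : Fin Nn → ℝ)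
    (hsh : ∀ e, sh e ≠ 0) (hrh : ∀ e, rh e ≠ 0)
    (hs : ∀ n, s n ≠ 0) (hr : ∀ n, r n ≠ 0)
    (Me : Matrix (Fin Ne) (Fin Nn) ℝ)
    (Wn : Matrix (Fin Nn) (Fin Ne) ℝ)
    (hWn : Wn = (Matrix.diagonal r)⁻¹ * (Matrix.diagonal s)⁻¹ * Meᵀ *
        Matrix.diagonal sh * Matrix.diagonal rh)
    (dV : Fin Nn → ℝ)
    (hdV : dV = (2 * π / 3) • (Matrix.diagonal s * Matrix.diagonal r).mulVec 1)
    (dVe : Fin Ne → ℝ)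
    (hdVe : dVe = (2 * π) • (Matrix.diagonal sh * Matrix.diagonal rh).mulVec 1)
    (Q : Fin Nn → ℝ) (Ue : Fin Ne → ℝ)
    (Qe : Fin Ne → ℝ) (hQe : Qe = (1/3 : ℝ) • Me.mulVec Q) :
    dV ⬝ᵥ (Q * Wn.mulVec Ue) = dVe ⬝ᵥ (Qe * Ue) :=
  stmt_8_general sh rh s r hs hr Me Wn hWn dV hdV dVe hdVe Q Ue Qe hQe
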